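/- arXiv:2206.06842 — 3 statements merged into one kernel-verified Lean document; each statement's English description precedes it below -/
import Mathlib

section
/- The 3×3 matrices A = λI₃ + N₃ and B = μI₃ + N₃² commute, but there is no invertible matrix S such that both S⁻¹AS and S⁻¹BS are Jordan matrices. -/
/-!
Conjugation by `S` is an algebra automorphism, so `S⁻¹AS = λ + M` and `S⁻¹BS = μ + M²` with
`M = S⁻¹NS` nilpotent and `M² ≠ 0`. If `λ + M` is a Jordan matrix it is upper triangular with
the single eigenvalue `λ`, so `M` is supported on the superdiagonal. Then `M²` is supported on
the second superdiagonal, where the Jordan matrix `μ + M²` vanishes; hence `M² = 0`.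
-/

open Matrix

def IsJordanMatrix {d : ℕ} (M : Matrix (Fin d) (Fin d) ℂ) : Prop :=
  (∀ i j : Fin d, (j : ℕ) ≠ (i : ℕ) → (j : ℕ) ≠ (i : ℕ) + 1 → M i j = 0) ∧
  (∀ i j : Fin d, (j : ℕ) = (i : ℕ) + 1 → M i j = 0 ∨ (M i j = 1 ∧ M i i = M j j))

open Polynomial

theorem Matrix.IsUpperTriangular.apply_self_eq_zero_of_isNilpotent {n R : Type*} [Fintype n]
    [DecidableEq n] [LinearOrder n] [CommRing R] [IsDomain R] {M : Matrix n n R}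
    (hM : M.IsUpperTriangular) (hnil : IsNilpotent M) (i : n) : M i i = 0 := by
  have hchar : ∏ j, (X - C (M j j)) = X ^ Fintype.card n := by
    rw [← charpoly_of_isUpperTriangular M hM]
    exact sub_eq_zero.mp (isNilpotent_charpoly_sub_pow_of_isNilpotent hnil).eq_zero
  have := congr_arg (eval (M i i)) hchar
  rw [eval_prod, Finset.prod_eq_zero (Finset.mem_univ i) (by simp), eval_pow, eval_X] at this
  exact pow_eq_zero_iff'.mp this.symm |>.1

def Matrix.IsSuperdiagonal {d : ℕ} {R : Type*} [Zero R] (M : Matrix (Fin d) (Fin d) R) : Prop :=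
  ∀ i j : Fin d, (j : ℕ) ≠ i + 1 → M i j = 0

theorem Matrix.IsSuperdiagonal.mul_self_apply_eq_zero {d : ℕ} {R : Type*}
    [NonUnitalNonAssocSemiring R] {M : Matrix (Fin d) (Fin d) R} (hM : M.IsSuperdiagonal)
    {i j : Fin d} (hij : (j : ℕ) ≠ i + 2) : (M * M) i j = 0 := by
  refine (mul_apply ..).trans <| Finset.sum_eq_zero fun k _ => ?_
  by_cases hk : (k : ℕ) = i + 1
  · rw [hM k j (by omega), mul_zero]
  · rw [hM i k hk, zero_mul]

namespace IsJordanMatrix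

variable {d : ℕ} {c c' : ℂ} {M : Matrix (Fin d) (Fin d) ℂ}

theorem apply_eq_zero_of_smul_one_add (hJ : IsJordanMatrix (c • 1 + M)) {i j : Fin d}
    (hji : (j : ℕ) ≠ i) (hij : (j : ℕ) ≠ i + 1) : M i j = 0 := by
  have := hJ.1 i j hji hij
  rwa [Matrix.add_apply, Matrix.smul_apply, one_apply_ne (fun h => hji (congrArg Fin.val h).symm),
    smul_zero, zero_add] at this

theorem isSuperdiagonal_of_smul_one_add (hJ : IsJordanMatrix (c • 1 + M))
    (hnil : IsNilpotent M) : M.IsSuperdiagonal := by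
  have htri : M.IsUpperTriangular := fun i j (hji : j < i) =>
    hJ.apply_eq_zero_of_smul_one_add (by omega) (by omega)
  intro i j hij
  obtain rfl | hne := eq_or_ne i j
  · exact htri.apply_self_eq_zero_of_isNilpotent hnil i
  · exact hJ.apply_eq_zero_of_smul_one_add (fun h => hne (Fin.ext h).symm) hij

theorem mul_self_eq_zero_of_smul_one_add (hM : M.IsSuperdiagonal)
    (hJ : IsJordanMatrix (c • 1 + M * M)) : M * M = 0 := by
  ext i j
  by_cases hij : (j : ℕ) = i + 2
  · exact hJ.apply_eq_zero_of_smul_one_add (by omega) (by omega)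
  · exact hM.mul_self_apply_eq_zero hij

theorem not_smul_one_add_and_smul_one_add_sq (hnil : IsNilpotent M) (hsq : M ^ 2 ≠ 0) :
    ¬ (IsJordanMatrix (c • 1 + M) ∧ IsJordanMatrix (c' • 1 + M ^ 2)) := by
  rintro ⟨hJ, hJ'⟩
  rw [sq] at hsq hJ'
  exact hsq (mul_self_eq_zero_of_smul_one_add (hJ.isSuperdiagonal_of_smul_one_add hnil) hJ')

end IsJordanMatrix

/-- The `3×3` matrices `A = λI + N₃` and `B = μI + N₃²` commute, but cannot be put
simultaneously into Jordan normal form. -/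
theorem not_simultaneously_jordanizable (lam mu : ℂ)
    (N A B : Matrix (Fin 3) (Fin 3) ℂ)
    (hN : N = Matrix.of fun i j : Fin 3 => if (i : ℕ) + 1 = (j : ℕ) then (1 : ℂ) else 0)
    (hA : A = lam • (1 : Matrix (Fin 3) (Fin 3) ℂ) + N)
    (hB : B = mu • (1 : Matrix (Fin 3) (Fin 3) ℂ) + N ^ 2) :
    A * B = B * A ∧
      ¬ ∃ S : Matrix (Fin 3) (Fin 3) ℂ, IsUnit S ∧
        IsJordanMatrix (S⁻¹ * A * S) ∧ IsJordanMatrix (S⁻¹ * B * S) := by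
  have hAN : Commute A N := hA ▸ ((Commute.one_left N).smul_left lam).add_left (Commute.refl N)
  refine ⟨(hB ▸ ((Commute.one_right A).smul_right mu).add_right (hAN.pow_right 2)).eq, ?_⟩
  rintro ⟨_, ⟨u, rfl⟩, hJA, hJB⟩
  have hN3 : N ^ 3 = 0 := by
    subst hN
    ext i j
    fin_cases i <;> fin_cases j <;> simp [pow_succ, mul_apply, Fin.sum_univ_three]
  have hN2 : N ^ 2 ≠ 0 := fun h => by
    have := congrFun (congrFun h 0) 2
    subst hN; simp [pow_succ, mul_apply, Fin.sum_univ_three] at this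
  let φ := MulSemiringAction.toAlgEquiv ℂ (Matrix (Fin 3) (Fin 3) ℂ) (ConjAct.toConjAct u⁻¹)
  have hφ (X) : (u : Matrix (Fin 3) (Fin 3) ℂ)⁻¹ * X * u = φ X := by
    simp [φ, ConjAct.units_smul_def, Matrix.coe_units_inv]
  rw [hφ, hA, map_add, map_smul, map_one] at hJA
  rw [hφ, hB, map_add, map_smul, map_one, map_pow] at hJB
  exact IsJordanMatrix.not_smul_one_add_and_smul_one_add_sq (IsNilpotent.map ⟨3, hN3⟩ φ)
    (by rwa [← map_pow, ne_eq, map_eq_zero_iff φ φ.injective]) ⟨hJA, hJB⟩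
end

section
/- Let A₁,...,A_n be pairwise commuting invertible d×d complex matrices. Then there exists a map v: ℂⁿ → GL_d(ℂ), entire (holomorphic) in z ∈ ℂⁿ, such that v(0) = I, v(eⱼ) = Aⱼ for the standard basis vectors eⱼ, and v(z+z') = v(z)v(z') for all z, z' ∈ ℂⁿ. -/
/-!
Choose logarithms `Lⱼ` of the `Aⱼ` inside the commutative algebra `S` generated by the `Aⱼ`;
then `v z = exp (∑ zⱼ Lⱼ)` works. Such logarithms exist because in a finite-dimensional
commutative complex Banach algebra the range of `exp` is an open subgroup of the unit group,
hence also closed in it, while the unit group is connected: the complex line through `1` and a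
unit `u` meets the non-units only at the finitely many `t` with `t⁻¹` in the spectrum of `1 - u`.
-/

open NormedSpace Polynomial Topology Pointwise

theorem spectrum.finite_of_isIntegral {𝕜 A : Type*} [Field 𝕜] [Ring A] [Algebra 𝕜 A] {a : A}
    (ha : IsIntegral 𝕜 a) : (spectrum 𝕜 a).Finite := by
  nontriviality A
  refine (finite_setOfPred_isRoot (minpoly.ne_zero ha)).subset fun r hr => ?_
  have := spectrum.subset_polynomial_aeval a (minpoly 𝕜 a) ⟨r, hr, rfl⟩
  rwa [minpoly.aeval, spectrum.zero_eq, Set.mem_singleton_iff] at this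

theorem Subalgebra.isUnit_of_isUnit_val {K A : Type*} [Field K] [Ring A] [Algebra K A]
    {S : Subalgebra K A} [FiniteDimensional K S] {x : S} (hx : IsUnit (x : A)) : IsUnit x :=
  IsArtinianRing.isUnit_of_isIntegral_of_nonZeroDivisor (Algebra.IsIntegral.isIntegral (R := K) x)
    (comap_nonZeroDivisors_le_of_injective (f := S.val) Subtype.val_injective
      hx.mem_nonZeroDivisors)

theorem isPathConnected_setOf_isUnit {𝔸 : Type*} [NormedRing 𝔸] [NormedAlgebra ℂ 𝔸]
    [FiniteDimensional ℂ 𝔸] : IsPathConnected {u : 𝔸 | IsUnit u} := by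
  refine ⟨1, isUnit_one, fun {u} hu => ?_⟩
  let c : ℂ → 𝔸 := fun t => 1 - t • (1 - u)
  have hnonunits : {t | ¬IsUnit (c t)} ⊆ Inv.inv '' spectrum ℂ (1 - u) := by
    intro t ht
    have ht0 : t ≠ 0 := by rintro rfl; simp [c] at ht
    refine ⟨t⁻¹, ?_, inv_inv t⟩
    rwa [spectrum.mem_iff, Algebra.algebraMap_eq_smul_one,
      show t⁻¹ • (1 : 𝔸) = (Units.mk0 t ht0)⁻¹ • 1 from rfl, IsUnit.smul_sub_iff_sub_inv_smul,
      inv_inv, Units.smul_mk0]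
  have hunits : IsPathConnected {t | ¬IsUnit (c t)}ᶜ :=
    ((spectrum.finite_of_isIntegral (Algebra.IsIntegral.isIntegral _)).image _ |>.subset hnonunits
      |>.countable).isPathConnected_compl_of_one_lt_rank (by simp [Complex.rank_real_complex])
  have hjoin := (hunits.joinedIn 0 (by simp [c]) 1 (by simpa [c] using hu)).map
    (f := c) (by fun_prop)
  simpa [c] using hjoin.mono (by rintro _ ⟨t, ht, rfl⟩; exact not_not.1 ht)

theorem range_exp_mem_nhds_one {𝔸 : Type*} [NormedRing 𝔸] [NormedAlgebra ℂ 𝔸] [CompleteSpace 𝔸] :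
    Set.range (exp : 𝔸 → 𝔸) ∈ 𝓝 1 := by
  have h : HasStrictFDerivAt (exp : 𝔸 → 𝔸) (ContinuousLinearEquiv.refl ℂ 𝔸 : 𝔸 →L[ℂ] 𝔸) 0 :=
    hasStrictFDerivAt_exp_zero
  have hmap := h.map_nhds_eq_of_equiv
  rw [exp_zero] at hmap
  exact hmap ▸ Filter.range_mem_map

theorem exists_exp_eq_of_isUnit {𝔸 : Type*} [NormedCommRing 𝔸] [NormedAlgebra ℂ 𝔸]
    [CompleteSpace 𝔸] (hU : IsPreconnected {u : 𝔸 | IsUnit u}) {u : 𝔸} (hu : IsUnit u) :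
    ∃ a, exp a = u := by
  let _ := NormedAlgebra.restrictScalars ℚ ℂ 𝔸
  have hnhds {v : 𝔸} (hv : IsUnit v) : v • Set.range (exp : 𝔸 → 𝔸) ∈ 𝓝 v := by
    simpa using (hv.smul_mem_nhds_smul_iff (a := (1 : 𝔸))).2 range_exp_mem_nhds_one
  have hopen : IsOpen (Set.range (exp : 𝔸 → 𝔸)) := by
    refine isOpen_iff_mem_nhds.2 ?_
    rintro _ ⟨a, rfl⟩
    refine Filter.mem_of_superset (hnhds (isUnit_exp a)) ?_
    rintro _ ⟨_, ⟨b, rfl⟩, rfl⟩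
    exact ⟨a + b, exp_add⟩
  have hopen' : IsOpen ({u : 𝔸 | IsUnit u} \ Set.range exp) := by
    refine isOpen_iff_mem_nhds.2 ?_
    rintro v ⟨hv, hvexp⟩
    refine Filter.mem_of_superset (hnhds hv) ?_
    rintro _ ⟨_, ⟨b, rfl⟩, rfl⟩
    refine ⟨hv.mul (isUnit_exp b), fun ⟨c, hc⟩ => hvexp ⟨c + -b, ?_⟩⟩
    rw [exp_add, hc]
    dsimp only
    rw [smul_eq_mul, mul_assoc, ← exp_add, add_neg_cancel, exp_zero, mul_one]
  exact hU.subset_left_of_subset_union hopen hopen' Set.disjoint_sdiff_right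
    (fun v hv => by by_cases h : v ∈ Set.range exp <;> simp_all)
    ⟨1, isUnit_one, 0, exp_zero⟩ hu

open scoped IsMulCommutative in
theorem Subalgebra.exists_mem_exp_eq {𝔸 : Type*} [NormedRing 𝔸] [NormedAlgebra ℂ 𝔸]
    [FiniteDimensional ℂ 𝔸] (S : Subalgebra ℂ 𝔸) [IsMulCommutative S] {b : 𝔸} (hb : b ∈ S)
    (hu : IsUnit b) : ∃ a ∈ S, exp a = b := by
  let _ : NormedCommRing S := { }
  have _ : CompleteSpace S := FiniteDimensional.complete ℂ S
  obtain ⟨a, ha⟩ := exists_exp_eq_of_isUnit isPathConnected_setOf_isUnit.isConnected.isPreconnected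
    (S.isUnit_of_isUnit_val (x := ⟨b, hb⟩) hu)
  let _ := NormedAlgebra.restrictScalars ℚ ℂ S
  let _ := NormedAlgebra.restrictScalars ℚ ℂ 𝔸
  exact ⟨a, a.2, (map_exp S.val continuous_subtype_val a).symm.trans (congrArg Subtype.val ha)⟩

theorem Matrix.exists_commuting_exp_eq {ι m : Type*} [Fintype m] [DecidableEq m]
    (A : ι → Matrix m m ℂ) (hcomm : ∀ i j, Commute (A i) (A j)) (hinv : ∀ i, IsUnit (A i)) :
    ∃ L : ι → Matrix m m ℂ, (∀ i j, Commute (L i) (L j)) ∧ ∀ i, exp (L i) = A i := by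
  let _ : NormedRing (Matrix m m ℂ) := Matrix.linftyOpNormedRing
  let _ : NormedAlgebra ℂ (Matrix m m ℂ) := Matrix.linftyOpNormedAlgebra
  let S := Algebra.adjoin ℂ (Set.range A)
  have hS : IsMulCommutative S :=
    Algebra.isMulCommutative_adjoin ℂ (by rintro _ ⟨i, rfl⟩ _ ⟨j, rfl⟩; exact hcomm i j)
  choose L hLS hL using fun i => S.exists_mem_exp_eq (Algebra.subset_adjoin ⟨i, rfl⟩) (hinv i)
  exact ⟨L, fun i j => congrArg Subtype.val (hS.is_comm.comm ⟨L i, hLS i⟩ ⟨L j, hLS j⟩), hL⟩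

theorem Matrix.exp_sum_smul_add {ι m : Type*} [Fintype ι] [Fintype m] [DecidableEq m]
    {L : ι → Matrix m m ℂ} (hL : ∀ i j, Commute (L i) (L j)) (z z' : ι → ℂ) :
    exp (∑ i, (z + z') i • L i) = exp (∑ i, z i • L i) * exp (∑ i, z' i • L i) := by
  rw [← Matrix.exp_add_of_commute]
  · simp only [Pi.add_apply, add_smul, Finset.sum_add_distrib]
  · exact Commute.sum_left _ _ _ fun i _ => Commute.sum_right _ _ _ fun j _ =>
      ((hL i j).smul_left _).smul_right _

theorem Matrix.differentiable_exp_sum_smul_apply {ι m : Type*} [Fintype ι] [Fintype m]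
    [DecidableEq m] (L : ι → Matrix m m ℂ) (i j : m) :
    Differentiable ℂ fun z : ι → ℂ => exp (∑ k, z k • L k) i j := by
  let _ : NormedRing (Matrix m m ℂ) := Matrix.linftyOpNormedRing
  let _ : NormedAlgebra ℂ (Matrix m m ℂ) := Matrix.linftyOpNormedAlgebra
  have _ : CompleteSpace (Matrix m m ℂ) := FiniteDimensional.complete ℂ _
  have hexp : Differentiable ℂ (exp : Matrix m m ℂ → Matrix m m ℂ) := fun x =>
    (NormedSpace.exp_analytic (𝕂 := ℂ) x).differentiableAt
  exact (entryLinearMap ℂ ℂ i j).toContinuousLinearMap.differentiable.comp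
    (hexp.comp (by fun_prop))

/-- Given pairwise commuting invertible `d×d` complex matrices `A₁,…,Aₙ`, there is an entire
homomorphism `v : ℂⁿ → GL_d(ℂ)` with `v(0) = I`, `v(eⱼ) = Aⱼ`, and `v(z+z') = v(z)v(z')`. -/
theorem entire_homomorphism_through_matrices (n d : ℕ)
    (A : Fin n → Matrix (Fin d) (Fin d) ℂ)
    (hcomm : ∀ i j, A i * A j = A j * A i)
    (hinv : ∀ j, IsUnit (A j)) :
    ∃ v : (Fin n → ℂ) → Matrix (Fin d) (Fin d) ℂ,
      (∀ i j : Fin d, Differentiable ℂ fun z => v z i j) ∧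
      (∀ z, IsUnit (v z)) ∧
      v 0 = 1 ∧
      (∀ j : Fin n, v (Pi.single j 1) = A j) ∧
      ∀ z z', v (z + z') = v z * v z' := by
  obtain ⟨L, hLcomm, hL⟩ := Matrix.exists_commuting_exp_eq A hcomm hinv
  refine ⟨fun z => exp (∑ i, z i • L i), Matrix.differentiable_exp_sum_smul_apply L,
    fun z => Matrix.isUnit_exp _, by simp, fun j => ?_, Matrix.exp_sum_smul_add hLcomm⟩
  simp [Pi.single_apply, hL]
end

section
/- Let P ⊂ ℝⁿ be the parallelotope P_ε = {Σᵢ tᵢ vᵢ : t ∈ (−ε, 1+ε)ⁿ} spanned by linearly independent vectors v₁,...,v_n. There is a constant κ₀ > 0, depending only on v₁,...,v_n, such that for every P ∈ ℝⁿ and every ε > ε' > 0, there exists R ∈ P_ε such that for all R' ∈ P_{ε'}: (R' − R)·P ≤ −κ₀(ε − ε')|P|. -/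
/-- Distance lemma for parallelotopes: for linearly independent `v₁,…,vₙ` there is
`κ₀ > 0` such that for any direction `p` and any `ε > ε' > 0` there is a point `R` of the
parallelotope `P_ε = {Σ tᵢvᵢ : t ∈ (−ε,1+ε)ⁿ}` with
`(R' − R)·p ≤ −κ₀(ε−ε')|p|` for all `R' ∈ P_{ε'}`. -/
theorem parallelotope_distance_lemma (n : ℕ)
    (v : Fin n → EuclideanSpace ℝ (Fin n)) (hv : LinearIndependent ℝ v) :
    ∃ κ₀ : ℝ, 0 < κ₀ ∧
      ∀ p : EuclideanSpace ℝ (Fin n), ∀ ε ε' : ℝ, 0 < ε' → ε' < ε →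
        ∃ R ∈ {x : EuclideanSpace ℝ (Fin n) |
            ∃ t : Fin n → ℝ, (∀ i, t i ∈ Set.Ioo (-ε) (1 + ε)) ∧ x = ∑ i, t i • v i},
          ∀ R' ∈ {x : EuclideanSpace ℝ (Fin n) |
              ∃ t : Fin n → ℝ, (∀ i, t i ∈ Set.Ioo (-ε') (1 + ε')) ∧ x = ∑ i, t i • v i},
            (inner ℝ (R' - R) p : ℝ) ≤ -κ₀ * (ε - ε') * ‖p‖ := by
  classical
  have hspan : Submodule.span ℝ (Set.range v) = ⊤ :=
    hv.span_eq_top_of_card_eq_finrank' (by simp)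
  -- the linear map p ↦ (⟪v i, p⟫)
  let T : EuclideanSpace ℝ (Fin n) →ₗ[ℝ] EuclideanSpace ℝ (Fin n) :=
    { toFun := fun p => WithLp.toLp 2 (fun i => inner ℝ (v i) p : Fin n → ℝ)
      map_add' := by intro x y; ext i; simp [inner_add_right]
      map_smul' := by intro c x; ext i; simp [inner_smul_right] }
  have hTinj : Function.Injective T := by
    rw [← LinearMap.ker_eq_bot, LinearMap.ker_eq_bot']
    intro p hp
    have h0 : ∀ i, (inner ℝ (v i) p : ℝ) = 0 := fun i => by simpa [T] using congrArg (fun x : EuclideanSpace ℝ (Fin n) => x i) hp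
    have hmem : p ∈ (Submodule.span ℝ (Set.range v))ᗮ := by
      rw [Submodule.mem_orthogonal]
      intro u hu
      induction hu using Submodule.span_induction with
      | mem x hx => obtain ⟨i, rfl⟩ := hx; exact h0 i
      | zero => simp
      | add x y _ _ hx hy => rw [inner_add_left, hx, hy, add_zero]
      | smul c x _ hx => rw [inner_smul_left, hx, mul_zero]
    rw [hspan, Submodule.top_orthogonal_eq_bot] at hmem
    simpa using hmem
  have hTbij : Function.Bijective T :=
    ⟨hTinj, (LinearMap.injective_iff_surjective).mp hTinj⟩
  let e : EuclideanSpace ℝ (Fin n) ≃L[ℝ] EuclideanSpace ℝ (Fin n) :=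
    (LinearEquiv.ofBijective T hTbij).toContinuousLinearEquiv
  set C : ℝ := ‖(e.symm : EuclideanSpace ℝ (Fin n) →L[ℝ] EuclideanSpace ℝ (Fin n))‖ + 1
    with hC
  have hCpos : 0 < C := by positivity
  have hnorm : ∀ p : EuclideanSpace ℝ (Fin n),
      ‖p‖ ≤ C * ∑ i, |(inner ℝ (v i) p : ℝ)| := by
    intro p
    have h1 : ‖p‖ ≤ C * ‖T p‖ := by
      have h := (e.symm : EuclideanSpace ℝ (Fin n) →L[ℝ] EuclideanSpace ℝ (Fin n)).le_opNorm (e p)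
      have hep : ((e.symm : EuclideanSpace ℝ (Fin n) →L[ℝ] EuclideanSpace ℝ (Fin n)) (e p)
          : EuclideanSpace ℝ (Fin n)) = p := e.symm_apply_apply p
      rw [hep] at h
      have heT : ‖(e p : EuclideanSpace ℝ (Fin n))‖ = ‖T p‖ := rfl
      rw [heT] at h
      nlinarith [norm_nonneg (T p)]
    have h2 : ‖T p‖ ≤ ∑ i, |(inner ℝ (v i) p : ℝ)| := by
      rw [EuclideanSpace.norm_eq]
      have : ∑ i, ‖(T p) i‖ ^ 2 ≤ (∑ i, |(inner ℝ (v i) p : ℝ)|) ^ 2 := by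
        have := Finset.sum_sq_le_sq_sum_of_nonneg
          (s := Finset.univ) (f := fun i => |(inner ℝ (v i) p : ℝ)|)
          (fun i _ => abs_nonneg _)
        simpa [T, Real.norm_eq_abs, sq_abs] using this
      calc Real.sqrt (∑ i, ‖(T p) i‖ ^ 2) ≤ Real.sqrt ((∑ i, |(inner ℝ (v i) p : ℝ)|) ^ 2) :=
            Real.sqrt_le_sqrt this
        _ = ∑ i, |(inner ℝ (v i) p : ℝ)| :=
            Real.sqrt_sq (Finset.sum_nonneg fun i _ => abs_nonneg _)
    calc ‖p‖ ≤ C * ‖T p‖ := h1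
      _ ≤ C * ∑ i, |(inner ℝ (v i) p : ℝ)| :=
          mul_le_mul_of_nonneg_left h2 hCpos.le
  refine ⟨1 / (2 * C), by positivity, fun p ε ε' hε' hlt => ?_⟩
  set δ : ℝ := (ε - ε') / 2 with hδ
  have hδpos : 0 < δ := by rw [hδ]; linarith
  set ε'' : ℝ := (ε + ε') / 2 with hε''
  have h1 : ε' < ε'' := by rw [hε'']; linarith
  have h2 : ε'' < ε := by rw [hε'']; linarith
  set t : Fin n → ℝ := fun i => if 0 ≤ (inner ℝ (v i) p : ℝ) then 1 + ε'' else -ε'' with ht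
  refine ⟨∑ i, t i • v i, ⟨t, fun i => ?_, rfl⟩, ?_⟩
  · rw [Set.mem_Ioo, ht]
    dsimp only
    split_ifs with h <;> constructor <;> linarith
  · rintro R' ⟨s, hs, rfl⟩
    have key : (inner ℝ (∑ i, s i • v i - ∑ i, t i • v i) p : ℝ)
        = ∑ i, (s i - t i) * (inner ℝ (v i) p : ℝ) := by
      rw [← Finset.sum_sub_distrib]
      simp_rw [← sub_smul]
      rw [sum_inner]
      simp_rw [real_inner_smul_left]
    rw [key]
    have hterm : ∀ i, (s i - t i) * (inner ℝ (v i) p : ℝ) ≤ -δ * |(inner ℝ (v i) p : ℝ)| := by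
      intro i
      by_cases h : 0 ≤ (inner ℝ (v i) p : ℝ)
      · have hti : t i = 1 + ε'' := by rw [ht]; exact if_pos h
        have hsle : s i - t i ≤ -δ := by
          have := (hs i).2; rw [hti]; linarith
        rw [abs_of_nonneg h]
        exact mul_le_mul_of_nonneg_right hsle h
      · push_neg at h
        have hti : t i = -ε'' := by rw [ht]; exact if_neg (not_le.mpr h)
        have hsge : δ ≤ s i - t i := by
          have := (hs i).1; rw [hti]; linarith
        rw [abs_of_neg h]
        nlinarith
    have hsum : ∑ i, (s i - t i) * (inner ℝ (v i) p : ℝ)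
        ≤ -δ * ∑ i, |(inner ℝ (v i) p : ℝ)| := by
      rw [Finset.mul_sum]
      exact Finset.sum_le_sum fun i _ => hterm i
    have hp := hnorm p
    calc ∑ i, (s i - t i) * (inner ℝ (v i) p : ℝ) ≤ -δ * ∑ i, |(inner ℝ (v i) p : ℝ)| := hsum
      _ ≤ -(1 / (2 * C)) * (ε - ε') * ‖p‖ := by
          rw [hδ]
          have hfac : (0:ℝ) ≤ 1 / (2 * C) * (ε - ε') :=
            mul_nonneg (by positivity) (by linarith)
          have h3 := mul_le_mul_of_nonneg_left hp hfac
          have h4 : 1 / (2 * C) * (ε - ε') * (C * ∑ i, |(inner ℝ (v i) p : ℝ)|)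
              = (ε - ε') / 2 * ∑ i, |(inner ℝ (v i) p : ℝ)| := by
            field_simp
          linarith
end
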